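/- In Ω = Aut(T), two first-level-active elements (u,v)σ and (u',v')σ are conjugate in Ω if and only if the products uv and u'v' are conjugate in Ω. -/

import Mathlib

open Equiv

/-- Vertices of the infinite rooted binary tree: finite words over `Bool`.
The parent of a nonempty word is `dropLast`. -/
abbrev Wd := List Bool

/-- The group `Ω = Aut(T)` of automorphisms of the infinite rooted binary tree,
realized as the subgroup of permutations of the vertex set preserving length
(levels) and the parent relation. -/
def OmegaSG : Subgroup (Equiv.Perm Wd) where
  carrier := {σ | (∀ w, (σ w).length = w.length) ∧ ∀ w, (σ w).dropLast = σ w.dropLast}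
  one_mem' := ⟨fun _ => rfl, fun _ => rfl⟩
  mul_mem' := by
    rintro σ τ ⟨hσl, hσd⟩ ⟨hτl, hτd⟩
    refine ⟨fun w => ?_, fun w => ?_⟩
    · simp [Equiv.Perm.mul_apply, hσl, hτl]
    · simp [Equiv.Perm.mul_apply, hσd, hτd]
  inv_mem' := by
    rintro σ ⟨hl, hd⟩
    refine ⟨fun w => ?_, fun w => ?_⟩
    · have := hl (σ⁻¹ w)
      rw [show σ (σ⁻¹ w) = w from σ.apply_symm_apply w] at this
      exact this.symm
    · apply σ.injective
      have := hd (σ⁻¹ w)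
      rw [show σ (σ⁻¹ w) = w from σ.apply_symm_apply w] at this
      rw [← this]
      simp

/-- The section pairing: `(u,v)` acts as `u` on the subtree rooted at `false`
and as `v` on the subtree rooted at `true`. -/
def pairFun (f g : Wd → Wd) : Wd → Wd
  | [] => []
  | false :: w => false :: f w
  | true :: w => true :: g w

@[simp] lemma pairFun_nil (f g : Wd → Wd) : pairFun f g [] = [] := rfl
@[simp] lemma pairFun_false (f g : Wd → Wd) (w : Wd) :
    pairFun f g (false :: w) = false :: f w := rfl
@[simp] lemma pairFun_true (f g : Wd → Wd) (w : Wd) :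
    pairFun f g (true :: w) = true :: g w := rfl

lemma pairFun_comp (f g f' g' : Wd → Wd) (hf : ∀ w, f (f' w) = w) (hg : ∀ w, g (g' w) = w) :
    ∀ w, pairFun f g (pairFun f' g' w) = w := by
  rintro (_ | ⟨(_|_), w⟩) <;> simp [hf, hg]

/-- The permutation `(u,v)` of the tree. -/
def pairPerm (u v : Equiv.Perm Wd) : Equiv.Perm Wd where
  toFun := pairFun u v
  invFun := pairFun u.symm v.symm
  left_inv := pairFun_comp _ _ _ _ (fun w => u.symm_apply_apply w) (fun w => v.symm_apply_apply w)
  right_inv := pairFun_comp _ _ _ _ (fun w => u.apply_symm_apply w) (fun w => v.apply_symm_apply w)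

@[simp] lemma pairPerm_apply (u v : Equiv.Perm Wd) (w : Wd) :
    pairPerm u v w = pairFun u v w := rfl

/-- The first-level swap `σ`. -/
def swapPerm : Equiv.Perm Wd where
  toFun w := match w with | [] => [] | b :: w => (!b) :: w
  invFun w := match w with | [] => [] | b :: w => (!b) :: w
  left_inv := by rintro (_ | ⟨b, w⟩) <;> simp
  right_inv := by rintro (_ | ⟨b, w⟩) <;> simp

@[simp] lemma swapPerm_nil : swapPerm [] = [] := rfl
@[simp] lemma swapPerm_cons (b : Bool) (w : Wd) : swapPerm (b :: w) = (!b) :: w := rfl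

lemma swapPerm_mem : swapPerm ∈ OmegaSG := by
  constructor
  · rintro (_ | ⟨b, w⟩) <;> simp
  · rintro (_ | ⟨b, w⟩)
    · simp
    · rcases eq_or_ne w [] with rfl | hw
      · simp
      · simp only [swapPerm_cons, List.dropLast_cons_of_ne_nil hw]

lemma mem_omega_length {u : Equiv.Perm Wd} (hu : u ∈ OmegaSG) (w : Wd) :
    (u w).length = w.length := hu.1 w

lemma mem_omega_ne_nil {u : Equiv.Perm Wd} (hu : u ∈ OmegaSG) {w : Wd} (hw : w ≠ []) :
    u w ≠ [] := by
  intro h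
  exact hw (List.eq_nil_of_length_eq_zero (by rw [← hu.1 w, h]; rfl))

lemma mem_omega_nil {u : Equiv.Perm Wd} (hu : u ∈ OmegaSG) : u [] = [] :=
  List.eq_nil_of_length_eq_zero (hu.1 [])

lemma pairPerm_mem {u v : Equiv.Perm Wd} (hu : u ∈ OmegaSG) (hv : v ∈ OmegaSG) :
    pairPerm u v ∈ OmegaSG := by
  constructor
  · rintro (_ | ⟨(_|_), w⟩) <;> simp [hu.1, hv.1]
  · rintro (_ | ⟨(_|_), w⟩)
    · simp
    · rcases eq_or_ne w [] with rfl | hw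
      · simp [mem_omega_nil hu]
      · simp only [pairPerm_apply, pairFun_false, List.dropLast_cons_of_ne_nil hw,
          List.dropLast_cons_of_ne_nil (mem_omega_ne_nil hu hw)]
        rw [hu.2]
    · rcases eq_or_ne w [] with rfl | hw
      · simp [mem_omega_nil hv]
      · simp only [pairPerm_apply, pairFun_true, List.dropLast_cons_of_ne_nil hw,
          List.dropLast_cons_of_ne_nil (mem_omega_ne_nil hv hw)]
        rw [hv.2]

/-- `(u,v)` as an element of `Ω`. -/
def pairOm (u v : OmegaSG) : OmegaSG := ⟨pairPerm u.1 v.1, pairPerm_mem u.2 v.2⟩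

/-- `σ` as an element of `Ω`. -/
def swapOm : OmegaSG := ⟨swapPerm, swapPerm_mem⟩

/-! ### Levels, restriction, sign, odometers -/

/-- Level `n` of the tree: words of length `n`. -/
abbrev Lv (n : ℕ) := {w : Wd // w.length = n}

instance fintypeLv (n : ℕ) : Fintype (Lv n) := by
  apply Fintype.ofSurjective (fun g : Fin n → Bool => (⟨List.ofFn g, List.length_ofFn (f := g)⟩ : Lv n))
  rintro ⟨w, rfl⟩
  exact ⟨w.get, Subtype.ext (List.ofFn_get w)⟩

/-- The permutation induced by `g ∈ Ω` on level `n`. -/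
def levelPerm (n : ℕ) (g : OmegaSG) : Equiv.Perm (Lv n) where
  toFun w := ⟨g.1 w.1, by rw [mem_omega_length g.2, w.2]⟩
  invFun w := ⟨(g⁻¹ : OmegaSG).1 w.1, by rw [mem_omega_length (g⁻¹ : OmegaSG).2, w.2]⟩
  left_inv w := Subtype.ext (by simp)
  right_inv w := Subtype.ext (by simp)

/-- Restriction to level `n` as a group homomorphism. -/
def levelHom (n : ℕ) : OmegaSG →* Equiv.Perm (Lv n) where
  toFun := levelPerm n
  map_one' := Equiv.ext fun w => Subtype.ext rfl
  map_mul' g h := Equiv.ext fun w => Subtype.ext rfl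

/-- `sgn_n`: the sign of the permutation induced on level `n`. -/
noncomputable def sgn (n : ℕ) (g : OmegaSG) : ℤˣ := Equiv.Perm.sign (levelPerm n g)

/-- An odometer: an element acting transitively on every level of the tree. -/
def IsOdometer (g : OmegaSG) : Prop :=
  ∀ n : ℕ, ∀ v w : Lv n, ∃ k : ℤ, ((g ^ k : OmegaSG) : Equiv.Perm Wd) v.1 = w.1

/-! ### The profinite topology on `Aut(T)` -/

instance : TopologicalSpace Wd := ⊥
instance : DiscreteTopology Wd := ⟨rfl⟩
instance : TopologicalSpace (Equiv.Perm Wd) :=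
  TopologicalSpace.induced (fun g => (g : Wd → Wd)) Pi.topologicalSpace

lemma continuous_permCoe : Continuous (fun g : Equiv.Perm Wd => (g : Wd → Wd)) :=
  continuous_induced_dom

lemma continuous_permApply (w : Wd) : Continuous fun g : Equiv.Perm Wd => g w :=
  (continuous_apply w).comp continuous_permCoe

instance : IsTopologicalGroup (Equiv.Perm Wd) where
  continuous_mul := by
    apply continuous_induced_rng.2
    apply continuous_pi
    intro w
    rw [continuous_discrete_rng]
    intro y
    have h : (fun p : Equiv.Perm Wd × Equiv.Perm Wd => ((p.1 * p.2 : Equiv.Perm Wd) : Wd → Wd) w) ⁻¹' {y}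
        = ⋃ x : Wd, {p : Equiv.Perm Wd × Equiv.Perm Wd | p.2 w = x} ∩ {p | p.1 x = y} := by
      ext p
      simp only [Set.mem_preimage, Set.mem_singleton_iff, Set.mem_iUnion, Set.mem_inter_iff,
        Set.mem_setOf_eq, Equiv.Perm.mul_apply]
      constructor
      · intro hh; exact ⟨p.2 w, rfl, hh⟩
      · rintro ⟨x, rfl, hh⟩; exact hh
    show IsOpen ((fun p : Equiv.Perm Wd × Equiv.Perm Wd =>
      ((p.1 * p.2 : Equiv.Perm Wd) : Wd → Wd) w) ⁻¹' {y})
    rw [h]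
    refine isOpen_iUnion fun x => IsOpen.inter ?_ ?_
    · exact IsOpen.preimage ((continuous_permApply w).comp continuous_snd) (isOpen_discrete {x})
    · exact IsOpen.preimage ((continuous_permApply x).comp continuous_fst) (isOpen_discrete {y})
  continuous_inv := by
    apply continuous_induced_rng.2
    apply continuous_pi
    intro w
    rw [continuous_discrete_rng]
    intro y
    have h : (fun g : Equiv.Perm Wd => ((g⁻¹ : Equiv.Perm Wd) : Wd → Wd) w) ⁻¹' {y}
        = {g : Equiv.Perm Wd | g y = w} := by
      ext g
      simp only [Set.mem_preimage, Set.mem_singleton_iff, Set.mem_setOf_eq]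
      constructor
      · rintro rfl; simp
      · intro hh; rw [← hh]; simp
    show IsOpen ((fun g : Equiv.Perm Wd => ((g⁻¹ : Equiv.Perm Wd) : Wd → Wd) w) ⁻¹' {y})
    rw [h]
    exact IsOpen.preimage (continuous_permApply y) (isOpen_discrete {w})

/-! ### The recursive generators `a₁ = σ`, `a₂ = (a₃⁻¹, a₂⁻¹)σ`, `a₃ = (a₂, a₃)` -/

mutual
  /-- The underlying function of `a₂`. -/
  def pA : Wd → Wd
    | [] => []
    | false :: w => true :: piA w
    | true :: w => false :: qiA w
  /-- The underlying function of `a₃`. -/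
  def qA : Wd → Wd
    | [] => []
    | false :: w => false :: pA w
    | true :: w => true :: qA w
  /-- The underlying function of `a₂⁻¹`. -/
  def piA : Wd → Wd
    | [] => []
    | false :: w => true :: qA w
    | true :: w => false :: pA w
  /-- The underlying function of `a₃⁻¹`. -/
  def qiA : Wd → Wd
    | [] => []
    | false :: w => false :: piA w
    | true :: w => true :: qiA w
end

lemma a_inv_lemma : ∀ w : Wd, pA (piA w) = w ∧ piA (pA w) = w ∧ qA (qiA w) = w ∧ qiA (qA w) = w := by
  intro w
  induction w with
  | nil => simp [pA, qA, piA, qiA]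
  | cons b w ih =>
    cases b <;>
      simp [pA, qA, piA, qiA, ih.1, ih.2.1, ih.2.2.1, ih.2.2.2]

/-- The generator `a₂`. -/
def a2 : Equiv.Perm Wd where
  toFun := pA
  invFun := piA
  left_inv w := (a_inv_lemma w).2.1
  right_inv w := (a_inv_lemma w).1

/-- The generator `a₃`. -/
def a3 : Equiv.Perm Wd where
  toFun := qA
  invFun := qiA
  left_inv w := (a_inv_lemma w).2.2.2
  right_inv w := (a_inv_lemma w).2.2.1

lemma a_length_lemma : ∀ w : Wd, (pA w).length = w.length ∧ (qA w).length = w.length ∧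
    (piA w).length = w.length ∧ (qiA w).length = w.length := by
  intro w
  induction w with
  | nil => simp [pA, qA, piA, qiA]
  | cons b w ih =>
    cases b <;>
      simp [pA, qA, piA, qiA, ih.1, ih.2.1, ih.2.2.1, ih.2.2.2]

lemma a_ne_nil {f : Wd → Wd} (hf : ∀ w : Wd, (f w).length = w.length) {w : Wd} (hw : w ≠ []) :
    f w ≠ [] := by
  intro h
  exact hw (List.eq_nil_of_length_eq_zero (by rw [← hf w, h]; rfl))

lemma a_dropLast_lemma : ∀ w : Wd, (pA w).dropLast = pA w.dropLast ∧
    (qA w).dropLast = qA w.dropLast ∧ (piA w).dropLast = piA w.dropLast ∧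
    (qiA w).dropLast = qiA w.dropLast := by
  intro w
  induction w with
  | nil => simp [pA, qA, piA, qiA]
  | cons b w ih =>
    rcases eq_or_ne w [] with rfl | hw
    · cases b <;> simp [pA, qA, piA, qiA]
    · have hp := a_ne_nil (fun w => (a_length_lemma w).1) hw
      have hq := a_ne_nil (fun w => (a_length_lemma w).2.1) hw
      have hpi := a_ne_nil (fun w => (a_length_lemma w).2.2.1) hw
      have hqi := a_ne_nil (fun w => (a_length_lemma w).2.2.2) hw
      cases b <;>
        simp [pA, qA, piA, qiA, List.dropLast_cons_of_ne_nil hw,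
          List.dropLast_cons_of_ne_nil hp, List.dropLast_cons_of_ne_nil hq,
          List.dropLast_cons_of_ne_nil hpi, List.dropLast_cons_of_ne_nil hqi,
          ih.1, ih.2.1, ih.2.2.1, ih.2.2.2]

lemma a2_mem : a2 ∈ OmegaSG :=
  ⟨fun w => (a_length_lemma w).1, fun w => (a_dropLast_lemma w).1⟩

lemma a3_mem : a3 ∈ OmegaSG :=
  ⟨fun w => (a_length_lemma w).2.1, fun w => (a_dropLast_lemma w).2.1⟩

/-- `a₁ = σ` as an element of `Ω`. -/
def A1 : OmegaSG := swapOm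
/-- `a₂` as an element of `Ω`. -/
def A2 : OmegaSG := ⟨a2, a2_mem⟩
/-- `a₃` as an element of `Ω`. -/
def A3 : OmegaSG := ⟨a3, a3_mem⟩

/-- `G = ⟨⟨a₁, a₃⟩⟩`, the topological closure of the subgroup generated by `a₁` and `a₃`:
a model of the geometric iterated monodromy group of `f(x) = 2/(x-1)²`. -/
noncomputable def Ggrp : Subgroup OmegaSG :=
  (Subgroup.closure {A1, A3}).topologicalClosure

/-- The normal closure in `G` of the closed subgroup generated by an element `c`:
the closed subgroup generated by all `G`-conjugates of `c`. -/
noncomputable def nclG (c : OmegaSG) : Subgroup OmegaSG :=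
  (Subgroup.closure {x | ∃ g ∈ Ggrp, x = g * c * g⁻¹}).topologicalClosure

/-- `U`, the normal closure in `G` of `⟨⟨a₂a₃⁻¹⟩⟩`. -/
noncomputable def Ugrp : Subgroup OmegaSG := nclG (A2 * A3⁻¹)

/-- `H₁`, the normal closure in `G` of `⟨⟨a₁⟩⟩`. -/
noncomputable def H1grp : Subgroup OmegaSG := nclG A1

/-- `H₃`, the normal closure in `G` of `⟨⟨a₃⟩⟩`. -/
noncomputable def H3grp : Subgroup OmegaSG := nclG A3

/-!
Every `g ∈ Ω` fixing the first level is `(a,b)`, its sections being read off on the two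
subtrees. If `g` conjugates `x = (u,v)σ` to `x' = (u',v')σ`, so does `g x`, and one of `g`, `g x`
fixes the first level; for `g = (a,b)` the equation `g x = x' g` says `a u = u' b` and
`b v = v' a`, whence `a (u v) = (u' v') a`. Conversely, if `c (u v) = (u' v') c`, then
`(c, u'⁻¹ c u)` conjugates `x` to `x'`.
-/

lemma isConj_iff_exists_semiconjBy {G : Type*} [Group G] {a b : G} :
    IsConj a b ↔ ∃ c : G, SemiconjBy c a b :=
  ⟨fun ⟨c, hc⟩ => ⟨c, hc⟩, fun ⟨c, hc⟩ => ⟨toUnits c, hc⟩⟩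

lemma OmegaSG.ext' {g h : OmegaSG} (H : ∀ w, g.1 w = h.1 w) : g = h :=
  Subtype.ext (Equiv.ext H)

lemma pairOm_mul (a b c d : OmegaSG) : pairOm a b * pairOm c d = pairOm (a * c) (b * d) :=
  OmegaSG.ext' <| by rintro (_ | ⟨(_ | _), w⟩) <;> rfl

lemma pairOm_inj {a b c d : OmegaSG} : pairOm a b = pairOm c d ↔ a = c ∧ b = d := by
  refine ⟨fun h => ⟨OmegaSG.ext' fun w => ?_, OmegaSG.ext' fun w => ?_⟩, fun ⟨rfl, rfl⟩ => rfl⟩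
  · simpa [pairOm] using congrArg (fun g : OmegaSG => g.1 (false :: w)) h
  · simpa [pairOm] using congrArg (fun g : OmegaSG => g.1 (true :: w)) h

lemma pairOm_mul_swapOm_mul_pairOm (a b c d : OmegaSG) :
    pairOm a b * swapOm * pairOm c d = pairOm (a * d) (b * c) * swapOm :=
  OmegaSG.ext' <| by rintro (_ | ⟨(_ | _), w⟩) <;> rfl

lemma OmegaSG.apply_take (g : OmegaSG) (k : ℕ) (w : Wd) : g.1 (w.take k) = (g.1 w).take k := by
  induction w using List.reverseRecOn with
  | nil => simp [mem_omega_nil g.2]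
  | append_singleton w x ih =>
    have hlen : (g.1 (w ++ [x])).length = w.length + 1 := by simp [mem_omega_length g.2]
    by_cases hk : k ≤ w.length
    · have hparent : g.1 w = (g.1 (w ++ [x])).take w.length := by
        have hdrop := g.2.2 (w ++ [x])
        rw [List.dropLast_concat] at hdrop
        rw [← hdrop, List.dropLast_eq_take, hlen, Nat.add_sub_cancel]
      rw [List.take_append_of_le_length hk, ih, hparent, List.take_take, min_eq_left hk]
    · rw [not_le] at hk
      rw [List.take_of_length_le (by simpa using hk), List.take_of_length_le (by omega)]

lemma OmegaSG.apply_cons (g : OmegaSG) {b : Bool} (hb : g.1 [b] = [b]) (w : Wd) :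
    g.1 (b :: w) = b :: (g.1 (b :: w)).tail := by
  have hhead : (g.1 (b :: w)).take 1 = [b] := by
    rw [← OmegaSG.apply_take, List.take_succ_cons, List.take_zero, hb]
  rw [← List.take_append_drop 1 (g.1 (b :: w)), hhead, List.drop_one]
  rfl

lemma OmegaSG.exists_section (g : OmegaSG) {b : Bool} (hb : g.1 [b] = [b]) :
    ∃ s : OmegaSG, ∀ w, g.1 (b :: w) = b :: s.1 w := by
  have hb' : (g⁻¹).1 [b] = [b] := by
    conv_lhs => rw [← hb]
    exact g.1.symm_apply_apply _
  refine ⟨⟨⟨fun w => (g.1 (b :: w)).tail, fun w => ((g⁻¹).1 (b :: w)).tail, fun w => ?_,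
    fun w => ?_⟩, fun w => ?_, fun w => ?_⟩, OmegaSG.apply_cons g hb⟩
  · show ((g⁻¹).1 (b :: (g.1 (b :: w)).tail)).tail = w
    rw [← OmegaSG.apply_cons g hb]
    exact congrArg List.tail (g.1.symm_apply_apply _)
  · show (g.1 (b :: ((g⁻¹).1 (b :: w)).tail)).tail = w
    rw [← OmegaSG.apply_cons g⁻¹ hb']
    exact congrArg List.tail (g.1.apply_symm_apply _)
  · simp [mem_omega_length g.2]
  · show ((g.1 (b :: w)).tail).dropLast = (g.1 (b :: w.dropLast)).tail
    rcases eq_or_ne w [] with rfl | hw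
    · simp [hb]
    · rw [← List.dropLast_cons_of_ne_nil hw, ← g.2.2, OmegaSG.apply_cons g hb]
      generalize (g.1 (b :: w)).tail = t
      cases t <;> simp

lemma OmegaSG.apply_singleton (g : OmegaSG) (b : Bool) : g.1 [b] = [false] ∨ g.1 [b] = [true] := by
  obtain ⟨c, hc⟩ := List.length_eq_one_iff.mp ((mem_omega_length g.2 [b]).trans rfl)
  cases c <;> simp [hc]

lemma OmegaSG.apply_singleton_true (g : OmegaSG) (h : g.1 [false] = [false]) :
    g.1 [true] = [true] :=
  (OmegaSG.apply_singleton g true).resolve_left fun h' =>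
    absurd (g.1.injective (h'.trans h.symm)) (by simp)

lemma OmegaSG.apply_singleton_false_or (g : OmegaSG) :
    g.1 [false] = [false] ∨ g.1 [true] = [false] := by
  have hinv : g.1 ((g⁻¹).1 [false]) = [false] := g.1.apply_symm_apply _
  rcases OmegaSG.apply_singleton g⁻¹ false with h | h <;> rw [h] at hinv
  exacts [.inl hinv, .inr hinv]

lemma OmegaSG.exists_eq_pairOm (g : OmegaSG) (h : g.1 [false] = [false]) :
    ∃ a b : OmegaSG, g = pairOm a b := by
  obtain ⟨a, ha⟩ := OmegaSG.exists_section g h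
  obtain ⟨b, hb⟩ := OmegaSG.exists_section g (OmegaSG.apply_singleton_true g h)
  refine ⟨a, b, OmegaSG.ext' ?_⟩
  rintro (_ | ⟨(_ | _), w⟩)
  exacts [mem_omega_nil g.2, ha w, hb w]

lemma pairOm_semiconjBy_iff (a b u v u' v' : OmegaSG) :
    SemiconjBy (pairOm a b) (pairOm u v * swapOm) (pairOm u' v' * swapOm) ↔
      a * u = u' * b ∧ b * v = v' * a := by
  rw [SemiconjBy, ← mul_assoc, pairOm_mul, pairOm_mul_swapOm_mul_pairOm, mul_left_inj, pairOm_inj]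

lemma pairOm_mul_swapOm_apply_false (u v : OmegaSG) :
    (pairOm u v * swapOm).1 [false] = [true] := by
  simp [pairOm, swapOm, mem_omega_nil v.2]

lemma exists_pairOm_semiconjBy {u v u' v' : OmegaSG}
    (h : IsConj (pairOm u v * swapOm) (pairOm u' v' * swapOm)) :
    ∃ a b : OmegaSG, SemiconjBy (pairOm a b) (pairOm u v * swapOm) (pairOm u' v' * swapOm) := by
  obtain ⟨g, hg⟩ := isConj_iff_exists_semiconjBy.mp h
  rcases OmegaSG.apply_singleton_false_or g with hfix | hfix
  · obtain ⟨a, b, rfl⟩ := OmegaSG.exists_eq_pairOm g hfix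
    exact ⟨a, b, hg⟩
  · obtain ⟨a, b, hab⟩ := OmegaSG.exists_eq_pairOm (g * (pairOm u v * swapOm)) <| by
      rw [Subgroup.coe_mul, Equiv.Perm.mul_apply, pairOm_mul_swapOm_apply_false, hfix]
    exact ⟨a, b, hab ▸ hg.mul_left (Commute.refl _)⟩

/-- In `Ω = Aut(T)`, `(u,v)σ` and `(u',v')σ` are conjugate
iff `uv` and `u'v'` are conjugate. -/
theorem stmt1 (u v u' v' : OmegaSG) :
    IsConj (pairOm u v * swapOm) (pairOm u' v' * swapOm) ↔ IsConj (u * v) (u' * v') := by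
  constructor
  · intro h
    obtain ⟨a, b, hab⟩ := exists_pairOm_semiconjBy h
    obtain ⟨hu, hv⟩ := (pairOm_semiconjBy_iff a b u v u' v').mp hab
    refine isConj_iff_exists_semiconjBy.mpr ⟨a, ?_⟩
    calc a * (u * v) = u' * (b * v) := by rw [← mul_assoc, hu, mul_assoc]
      _ = u' * v' * a := by rw [hv, mul_assoc]
  · intro h
    obtain ⟨c, hc⟩ := isConj_iff_exists_semiconjBy.mp h
    refine isConj_iff_exists_semiconjBy.mpr ⟨pairOm c (u'⁻¹ * c * u), ?_⟩
    refine (pairOm_semiconjBy_iff _ _ u v u' v').mpr ⟨by group, ?_⟩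
    calc u'⁻¹ * c * u * v = u'⁻¹ * (c * (u * v)) := by group
      _ = v' * c := by rw [hc.eq]; group
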